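/- arXiv:2006.10568 — 4 statements merged into one kernel-verified Lean document; each statement's English description precedes it below -/
import Mathlib

section
/- Assume p(A) is a compact operator and that there exist constants C > 0 and d > 0 such that 𝒩(p(A), {μ ∈ ℝ : |μ| ≥ τ}) ≤ C·τ^(−d) for every τ ∈ (0,1]. Then there exist δ₀ > 0 and C' > 0 such that for every ι ∈ {1,…,L} and every τ ∈ (0, δ₀) one has 𝒩(A, {μ ∈ ℝ : τ ≤ |μ − ω_ι| ≤ δ₀}) ≤ C'·τ^(−d). (Abstract form of the paper's Proposition on the rough eigenvalue estimate near points of the essential spectrum.) -/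
/-! An eigenvector of `A` for an eigenvalue `μ` at distance between `τ` and `δ` from `ω_ι` is an
eigenvector of `p(A)` for `p(μ) = ∏_κ (μ - ω_κ)`. When `2δ` is at most the gap between the `ω_κ`,
every other factor has modulus at least `δ`, so `|p(μ)| ≥ δ^(L-1) τ`. Hence the eigenvalues of `A`
in the annulus are dominated by those of `p(A)` of modulus at least `δ^(L-1) τ`, and the assumed
bound for `p(A)` at the threshold `δ^(L-1) τ` is the claimed bound with `C' = C δ^(-(L-1) d)`. -/

open scoped ENNReal
open Filter Topology

/-- The number of eigenvalues of `T` in a set `S ⊆ ℝ`, counted with multiplicity: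
the dimension (a natural number or `∞`, viewed in `ℝ≥0∞`) of the closed linear span
of the eigenspaces `ker (T - μ)` over `μ ∈ S`. -/
noncomputable def eigCount {H : Type*} [NormedAddCommGroup H] [InnerProductSpace ℂ H]
    (T : H →L[ℂ] H) (S : Set ℝ) : ℝ≥0∞ :=
  ((Cardinal.toENat (Module.rank ℂ
      (⨆ μ ∈ S, Module.End.eigenspace (T : H →ₗ[ℂ] H) (μ : ℂ)).topologicalClosure)) : ℝ≥0∞)

theorem exists_pos_two_mul_le_abs_sub {ι : Type*} [Finite ι] {ω : ι → ℝ}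
    (hω : Function.Injective ω) : ∃ δ > 0, ∀ i j, i ≠ j → 2 * δ ≤ |ω i - ω j| := by
  have hsmall : ∀ᶠ δ in 𝓝[>] (0 : ℝ), ∀ i j, i ≠ j → 2 * δ ≤ |ω i - ω j| := by
    simp only [eventually_all]
    intro i j hij
    have hpos : 0 < |ω i - ω j| := abs_pos.mpr (sub_ne_zero.mpr (hω.ne hij))
    have hlim : Tendsto (fun δ : ℝ => 2 * δ) (𝓝[>] 0) (𝓝 0) :=
      tendsto_nhdsWithin_of_tendsto_nhds (by simpa using (continuous_const_mul (2 : ℝ)).tendsto 0)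
    exact hlim.eventually (ge_mem_nhds hpos)
  exact (hsmall.and self_mem_nhdsWithin).exists.imp fun δ h => ⟨h.2, h.1⟩

theorem pow_mul_abs_sub_le_abs_prod_sub {ι : Type*} [Fintype ι] {ω : ι → ℝ} {δ μ : ℝ} {i : ι}
    (hsep : ∀ j, j ≠ i → 2 * δ ≤ |ω i - ω j|) (hμ : |μ - ω i| ≤ δ) :
    δ ^ (Fintype.card ι - 1) * |μ - ω i| ≤ |∏ j, (μ - ω j)| := by
  classical
  have hδ : 0 ≤ δ := (abs_nonneg _).trans hμ
  have hfar : ∀ j ∈ Finset.univ.erase i, δ ≤ |μ - ω j| := fun j hj => by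
    have htri : |ω i - ω j| ≤ |μ - ω j| + |μ - ω i| :=
      calc |ω i - ω j| = |(μ - ω j) - (μ - ω i)| := by congr 1; ring
        _ ≤ |μ - ω j| + |μ - ω i| := abs_sub _ _
    linarith [hsep j (Finset.ne_of_mem_erase hj)]
  have hrest : δ ^ (Fintype.card ι - 1) ≤ ∏ j ∈ Finset.univ.erase i, |μ - ω j| := by
    calc δ ^ (Fintype.card ι - 1) = ∏ _j ∈ Finset.univ.erase i, δ := by
          rw [Finset.prod_const, Finset.card_erase_of_mem (Finset.mem_univ i), Finset.card_univ]
      _ ≤ ∏ j ∈ Finset.univ.erase i, |μ - ω j| := Finset.prod_le_prod (fun _ _ => hδ) hfar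
  rw [Finset.abs_prod, ← Finset.mul_prod_erase _ _ (Finset.mem_univ i), mul_comm]
  exact mul_le_mul_of_nonneg_left hrest (abs_nonneg _)

theorem ofFn_prod_sub_smul_one_apply_of_apply_eq_smul {𝕜 E : Type*} [NormedField 𝕜]
    [NormedAddCommGroup E] [NormedSpace 𝕜 E] (T : E →L[𝕜] E) {μ : 𝕜} {v : E}
    (hv : T v = μ • v) {n : ℕ} (c : Fin n → 𝕜) :
    (List.ofFn fun i => T - c i • 1).prod v = (∏ i, (μ - c i)) • v := by
  induction n with
  | zero => simp
  | succ n ih =>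
    rw [List.ofFn_succ, List.prod_cons, mul_apply_eq_comp, ih, map_smul, sub_apply, hv,
      smul_apply, one_apply_eq_self, ← sub_smul, smul_smul, Fin.prod_univ_succ, mul_comm]

theorem eigenspace_le_eigenspace_ofFn_prod_sub_smul_one {𝕜 E : Type*} [NormedField 𝕜]
    [NormedAddCommGroup E] [NormedSpace 𝕜 E] (T : E →L[𝕜] E) (μ : 𝕜) {n : ℕ} (c : Fin n → 𝕜) :
    Module.End.eigenspace (T : E →ₗ[𝕜] E) μ ≤
      Module.End.eigenspace (((List.ofFn fun i => T - c i • 1).prod : E →L[𝕜] E) : E →ₗ[𝕜] E)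
        (∏ i, (μ - c i)) := fun v hv => by
  rw [Module.End.mem_eigenspace_iff] at hv ⊢
  exact ofFn_prod_sub_smul_one_apply_of_apply_eq_smul T hv c

theorem eigCount_le_of_forall_eigenspace_le {H : Type*} [NormedAddCommGroup H]
    [InnerProductSpace ℂ H] {A B : H →L[ℂ] H} {S S' : Set ℝ}
    (h : ∀ μ ∈ S, ∃ ν ∈ S', Module.End.eigenspace (A : H →ₗ[ℂ] H) (μ : ℂ) ≤
      Module.End.eigenspace (B : H →ₗ[ℂ] H) (ν : ℂ)) :
    eigCount A S ≤ eigCount B S' := by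
  have hspan : (⨆ μ ∈ S, Module.End.eigenspace (A : H →ₗ[ℂ] H) (μ : ℂ)) ≤
      ⨆ ν ∈ S', Module.End.eigenspace (B : H →ₗ[ℂ] H) (ν : ℂ) := iSup₂_le fun μ hμ => by
    obtain ⟨ν, hν, hle⟩ := h μ hμ
    exact hle.trans (le_iSup₂_of_le ν hν le_rfl)
  unfold eigCount
  exact_mod_cast Cardinal.toENat.monotone'
    (Submodule.rank_mono (Submodule.topologicalClosure_mono hspan))

theorem eigCount_annulus_le_eigCount_ofFn_prod {H : Type*} [NormedAddCommGroup H]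
    [InnerProductSpace ℂ H] {L : ℕ} (ω : Fin L → ℝ) (A : H →L[ℂ] H) {δ τ : ℝ} {ι : Fin L}
    (hsep : ∀ κ, κ ≠ ι → 2 * δ ≤ |ω ι - ω κ|) :
    eigCount A {μ : ℝ | τ ≤ |μ - ω ι| ∧ |μ - ω ι| ≤ δ} ≤
      eigCount (List.ofFn fun κ : Fin L => A - (ω κ : ℂ) • 1).prod
        {ν : ℝ | δ ^ (L - 1) * τ ≤ |ν|} := by
  refine eigCount_le_of_forall_eigenspace_le fun μ ⟨hτ, hδ⟩ => ⟨∏ κ, (μ - ω κ), ?_, ?_⟩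
  · have hpow : 0 ≤ δ ^ (L - 1) := pow_nonneg ((abs_nonneg _).trans hδ) _
    calc δ ^ (L - 1) * τ ≤ δ ^ (L - 1) * |μ - ω ι| := mul_le_mul_of_nonneg_left hτ hpow
      _ ≤ |∏ κ, (μ - ω κ)| := by
        simpa only [Fintype.card_fin] using pow_mul_abs_sub_le_abs_prod_sub hsep hδ
  · push_cast
    exact eigenspace_le_eigenspace_ofFn_prod_sub_smul_one A (μ : ℂ) fun κ => (ω κ : ℂ)

theorem rough_eigenvalue_estimate_general
    {H : Type*} [NormedAddCommGroup H] [InnerProductSpace ℂ H]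
    {L : ℕ} (ω : Fin L → ℝ) (hω : StrictMono ω)
    (A : H →L[ℂ] H)
    (pA : H →L[ℂ] H)
    (hpA : pA = (List.ofFn fun ι : Fin L => A - (ω ι : ℂ) • 1).prod)
    (C d : ℝ) (hC : 0 < C)
    (hbound : ∀ τ : ℝ, 0 < τ → τ ≤ 1 →
      eigCount pA {μ : ℝ | τ ≤ |μ|} ≤ ENNReal.ofReal (C * τ ^ (-d))) :
    ∃ δ₀ > (0 : ℝ), ∃ C' > (0 : ℝ), ∀ ι : Fin L, ∀ τ : ℝ, 0 < τ → τ < δ₀ →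
      eigCount A {μ : ℝ | τ ≤ |μ - ω ι| ∧ |μ - ω ι| ≤ δ₀} ≤ ENNReal.ofReal (C' * τ ^ (-d)) := by
  obtain ⟨δ, hδ, hsep⟩ := exists_pos_two_mul_le_abs_sub hω.injective
  set δ₀ := min δ 1
  have hδ₀ : 0 < δ₀ := lt_min hδ one_pos
  have hc : 0 < δ₀ ^ (L - 1) := pow_pos hδ₀ _
  have hc1 : δ₀ ^ (L - 1) ≤ 1 := pow_le_one₀ hδ₀.le (min_le_right _ _)
  refine ⟨δ₀, hδ₀, C * (δ₀ ^ (L - 1)) ^ (-d), by positivity, fun ι τ hτ hτδ => ?_⟩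
  have hsep₀ : ∀ κ, κ ≠ ι → 2 * δ₀ ≤ |ω ι - ω κ| := fun κ hκ =>
    (mul_le_mul_of_nonneg_left (min_le_left _ _) two_pos.le).trans (hsep ι κ hκ.symm)
  calc eigCount A {μ : ℝ | τ ≤ |μ - ω ι| ∧ |μ - ω ι| ≤ δ₀}
      ≤ eigCount pA {ν : ℝ | δ₀ ^ (L - 1) * τ ≤ |ν|} :=
        hpA ▸ eigCount_annulus_le_eigCount_ofFn_prod ω A hsep₀
    _ ≤ ENNReal.ofReal (C * (δ₀ ^ (L - 1) * τ) ^ (-d)) :=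
        hbound _ (mul_pos hc hτ) (mul_le_one₀ hc1 hτ.le (hτδ.le.trans (min_le_right _ _)))
    _ = ENNReal.ofReal (C * (δ₀ ^ (L - 1)) ^ (-d) * τ ^ (-d)) := by
        rw [Real.mul_rpow hc.le hτ.le, mul_assoc]

/-- If `p(A)` is compact and `𝒩(p(A), {|μ| ≥ τ}) ≤ C τ^(-d)` for `τ ∈ (0,1]`, then there are
`δ₀ > 0` and `C' > 0` with `𝒩(A, {τ ≤ |μ - ω_ι| ≤ δ₀}) ≤ C' τ^(-d)` for all `ι` and
`τ ∈ (0, δ₀)`. -/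
theorem rough_eigenvalue_estimate
    {H : Type*} [NormedAddCommGroup H] [InnerProductSpace ℂ H] [CompleteSpace H]
    {L : ℕ} (hL : 0 < L) (ω : Fin L → ℝ) (hω : StrictMono ω)
    (A : H →L[ℂ] H) (hA : IsSelfAdjoint A)
    (pA : H →L[ℂ] H)
    (hpA : pA = (List.ofFn fun ι : Fin L => A - (ω ι : ℂ) • 1).prod)
    (hcpt : IsCompactOperator pA)
    (C d : ℝ) (hC : 0 < C) (hd : 0 < d)
    (hbound : ∀ τ : ℝ, 0 < τ → τ ≤ 1 →
      eigCount pA {μ : ℝ | τ ≤ |μ|} ≤ ENNReal.ofReal (C * τ ^ (-d))) :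
    ∃ δ₀ > (0 : ℝ), ∃ C' > (0 : ℝ), ∀ ι : Fin L, ∀ τ : ℝ, 0 < τ → τ < δ₀ →
      eigCount A {μ : ℝ | τ ≤ |μ - ω ι| ∧ |μ - ω ι| ≤ δ₀} ≤ ENNReal.ofReal (C' * τ ^ (-d)) :=
  rough_eigenvalue_estimate_general ω hω A pA hpA C d hC hbound
end

section
/- Let A be a bounded self-adjoint operator on a complex Hilbert space H, let p be a nonconstant polynomial with real coefficients, and let μ ∈ ℝ. Then the eigenspace ker(p(A) − μ·I) equals the supremum (the span, which is a finite orthogonal direct sum) of the eigenspaces ker(A − t·I) over all real numbers t with p(t) = μ. -/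
/-!
Write `p(A) - μ = Q(A)` with `Q = p - μ ∈ ℂ[X]`, which is nonzero since `p` is nonconstant.
Factoring `Q = c ∏ (X - z) ^ m_z` over `ℂ` into pairwise coprime factors splits `ker Q(A)` into
the generalised eigenspaces `ker (A - z) ^ m_z` at the roots `z` of `Q`. A self-adjoint operator is
semisimple, so these are the eigenspaces `ker (A - z)`, and they vanish unless `z` is real.
-/

open Function Polynomial Module.End

namespace ContinuousLinearMap

variable {R M : Type*} [CommRing R] [TopologicalSpace M] [AddCommGroup M]
  [IsTopologicalAddGroup M] [Module R M] [ContinuousConstSMul R M]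

def toLinearMapAlgHom : (M →L[R] M) →ₐ[R] Module.End R M :=
  { toLinearMapRingHom with commutes' := fun _ => rfl }

theorem coe_aeval (A : M →L[R] M) (P : R[X]) :
    ((aeval A P : M →L[R] M) : Module.End R M) = aeval (A : Module.End R M) P :=
  (aeval_algHom_apply toLinearMapAlgHom A P).symm

end ContinuousLinearMap

theorem Polynomial.ker_aeval_prod_of_pairwise_coprime {R M ι : Type*} [CommRing R]
    [AddCommGroup M] [Module R M] (f : Module.End R M) {s : Finset ι} {g : ι → R[X]}
    (hg : (s : Set ι).Pairwise (IsCoprime on g)) :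
    LinearMap.ker (aeval f (∏ i ∈ s, g i)) = ⨆ i ∈ s, LinearMap.ker (aeval f (g i)) := by
  classical
  induction s using Finset.induction_on with
  | empty => simp [Module.End.one_eq_id]
  | insert a s ha ih =>
    rw [Finset.coe_insert, Set.pairwise_insert_of_notMem (by simpa)] at hg
    rw [Finset.prod_insert ha, Finset.iSup_insert, ← ih hg.1,
      sup_ker_aeval_eq_ker_aeval_mul_of_coprime f
        (IsCoprime.prod_right fun j hj => (hg.2 j hj).1)]

namespace Module.End

variable {K M : Type*} [Field K] [AddCommGroup M] [Module K M]

theorem ker_aeval_eq_iSup_genEigenspace [DecidableEq K] (f : End K M) {Q : K[X]} (hQ : Q.Splits)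
    (hQ0 : Q ≠ 0) :
    LinearMap.ker (aeval f Q) =
      ⨆ z ∈ Q.roots.toFinset, f.genEigenspace z (Q.rootMultiplicity z) := by
  conv_lhs =>
    rw [← C_leadingCoeff_mul_prod_multiset_X_sub_C (splits_iff_card_roots.mp hQ),
      prod_multiset_root_eq_finset_root]
  rw [map_mul, aeval_C, Algebra.algebraMap_eq_smul_one, smul_mul_assoc, one_mul,
    LinearMap.ker_smul _ _ (leadingCoeff_ne_zero.mpr hQ0),
    ker_aeval_prod_of_pairwise_coprime (g := fun z => (X - C z) ^ Q.rootMultiplicity z) f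
      fun z _ w _ hzw => (pairwise_coprime_X_sub_C Function.injective_id hzw).pow]
  simp only [genEigenspace_nat, map_pow, map_sub, aeval_X, aeval_C,
    Algebra.algebraMap_eq_smul_one]

theorem IsFinitelySemisimple.ker_aeval_eq_iSup_eigenspace {f : End K M}
    (hf : f.IsFinitelySemisimple) {Q : K[X]} (hQ : Q.Splits) (hQ0 : Q ≠ 0) :
    LinearMap.ker (aeval f Q) = ⨆ (z) (_ : Q.IsRoot z), f.eigenspace z := by
  classical
  rw [ker_aeval_eq_iSup_genEigenspace f hQ hQ0]
  refine iSup_congr fun z => ?_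
  have hroot : z ∈ Q.roots.toFinset ↔ Q.IsRoot z := by
    rw [Multiset.mem_toFinset, mem_roots hQ0]
  refine iSup_congr_Prop hroot fun hz => hf.genEigenspace_eq_eigenspace z ?_
  exact_mod_cast (rootMultiplicity_pos hQ0).mpr hz

end Module.End

theorem LinearMap.IsSymmetric.iSup_eigenspace_eq_iSup_eigenspace_ofReal {𝕜 E : Type*}
    [RCLike 𝕜] [NormedAddCommGroup E] [InnerProductSpace 𝕜 E] {T : E →ₗ[𝕜] E}
    (hT : T.IsSymmetric) (P : 𝕜 → Prop) :
    ⨆ (z : 𝕜) (_ : P z), eigenspace T z = ⨆ (t : ℝ) (_ : P t), eigenspace T (t : 𝕜) := by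
  refine le_antisymm (iSup₂_le fun z hz => ?_)
    (iSup₂_le fun t ht => le_iSup₂_of_le (t : 𝕜) ht le_rfl)
  by_cases hz0 : eigenspace T z = ⊥
  · exact hz0 ▸ bot_le
  have hreal : (RCLike.re z : 𝕜) = z :=
    RCLike.conj_eq_iff_re.mp (hT.conj_eigenvalue_eq_self (hasEigenvalue_iff.mpr hz0))
  exact le_iSup₂_of_le (RCLike.re z) (by rwa [hreal]) (by rw [hreal])

/-- For a bounded self-adjoint operator `A` and a nonconstant real polynomial `p`, the
eigenspace of `p(A)` for a real eigenvalue `μ` is the span of the eigenspaces of `A`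
for the real numbers `t` with `p(t) = μ`. -/
theorem eigenspace_polynomial_eq_iSup
    {H : Type*} [NormedAddCommGroup H] [InnerProductSpace ℂ H] [CompleteSpace H]
    (A : H →L[ℂ] H) (hA : IsSelfAdjoint A)
    (p : Polynomial ℝ) (hp : 0 < p.natDegree) (μ : ℝ) :
    Module.End.eigenspace
        (((Polynomial.aeval A (p.map (algebraMap ℝ ℂ)) : H →L[ℂ] H)) : H →ₗ[ℂ] H) (μ : ℂ)
      = ⨆ t : {t : ℝ // p.eval t = μ},
          Module.End.eigenspace (A : H →ₗ[ℂ] H) ((t : ℝ) : ℂ) := by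
  set Q : ℂ[X] := p.map (algebraMap ℝ ℂ) - C (μ : ℂ)
  have hQ0 : Q ≠ 0 :=
    ne_zero_of_natDegree_gt (n := 0) (by rwa [natDegree_sub_C, natDegree_map])
  have hroot (t : ℝ) : Q.IsRoot t ↔ p.eval t = μ := by
    rw [IsRoot.def, eval_sub, eval_C, eval_map, sub_eq_zero, ← Complex.ofReal_inj]
    exact Iff.of_eq (congrArg (· = (μ : ℂ)) (eval₂_at_apply (algebraMap ℝ ℂ) t))
  have hker : eigenspace ((aeval A (p.map (algebraMap ℝ ℂ)) : H →L[ℂ] H) : H →ₗ[ℂ] H) μ =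
      LinearMap.ker (aeval (A : H →ₗ[ℂ] H) Q) := by
    rw [eigenspace_def, ContinuousLinearMap.coe_aeval, map_sub, aeval_C,
      Algebra.algebraMap_eq_smul_one]
  rw [hker, hA.isSymmetric.isFinitelySemisimple.ker_aeval_eq_iSup_eigenspace
      (IsAlgClosed.splits Q) hQ0,
    hA.isSymmetric.iSup_eigenspace_eq_iSup_eigenspace_ofReal, iSup_subtype]
  exact iSup_congr fun t => iSup_congr_Prop (hroot t) fun _ => rfl
end

section
/- Let H be a complex Hilbert space, let T : H → H be a bounded self-adjoint operator that is positive and invertible, and let K : H → H be a bounded operator satisfying K ∘ T = T ∘ K*, where K* is the Hilbert-space adjoint of K. Then the spectrum of K is contained in ℝ. -/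
/-!
Since `T` is strictly positive, `T = S * S` with `S` self-adjoint and invertible. The relation
`K T = T K*` then says exactly that `S⁻¹ K S` is self-adjoint, and conjugating by a unit does not
change the spectrum, so the spectrum of `K` is that of a self-adjoint element, hence real.
-/

theorem Units.isSelfAdjoint_inv_mul_mul_of_mul_mul_self_eq {A : Type*} [Monoid A] [StarMul A]
    {u : Aˣ} (hu : IsSelfAdjoint (u : A)) {k : A} (hk : k * (u * u) = u * u * star k) :
    IsSelfAdjoint (↑u⁻¹ * k * u) := by
  have hu_inv : star (↑u⁻¹ : A) = ↑u⁻¹ := by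
    rw [← Units.coe_star_inv, show star u = u from Units.ext hu.star_eq]
  calc star (↑u⁻¹ * k * u) = u * star k * ↑u⁻¹ := by
        rw [star_mul, star_mul, hu.star_eq, hu_inv, mul_assoc]
    _ = ↑u⁻¹ * (u * u * star k) * ↑u⁻¹ := by simp only [mul_assoc, Units.inv_mul_cancel_left]
    _ = ↑u⁻¹ * k * u := by rw [← hk]; simp only [mul_assoc, Units.mul_inv, mul_one]

theorem CStarAlgebra.im_eq_zero_of_mem_spectrum_of_mul_eq_mul_star {A : Type*} [CStarAlgebra A]
    [PartialOrder A] [StarOrderedRing A] {b k : A} (hb : IsStrictlyPositive b)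
    (hk : k * b = b * star k) : ∀ z ∈ spectrum ℂ k, z.im = 0 := by
  obtain ⟨s, hs_unit, hs_sa, rfl⟩ :=
    CStarAlgebra.isStrictlyPositive_iff_exists_isUnit_and_isSelfAdjoint_and_eq_mul_self.mp hb
  obtain ⟨u, rfl⟩ := hs_unit
  intro z hz
  rw [← spectrum.units_conjugate' (u := u)] at hz
  exact (Units.isSelfAdjoint_inv_mul_mul_of_mul_mul_self_eq hs_sa hk).im_eq_zero_of_mem_spectrum hz

/-- If `T` is a positive invertible self-adjoint operator and `K` satisfies
`K ∘ T = T ∘ K*`, then the spectrum of `K` is real. -/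
theorem symmetrizable_spectrum_real
    {H : Type*} [NormedAddCommGroup H] [InnerProductSpace ℂ H] [CompleteSpace H]
    (T : H →L[ℂ] H) (hTpos : T.IsPositive) (hTunit : IsUnit T)
    (K : H →L[ℂ] H) (hPlemelj : K * T = T * ContinuousLinearMap.adjoint K) :
    ∀ z ∈ spectrum ℂ K, z.im = 0 :=
  CStarAlgebra.im_eq_zero_of_mem_spectrum_of_mul_eq_mul_star
    (hTunit.isStrictlyPositive ((ContinuousLinearMap.nonneg_iff_isPositive T).mpr hTpos)) hPlemelj
end

section
/- Fix q ∈ {1,2,3} and define u : ℝ³∖{0} → ℝ³ by u_p(x) = λ'·δ_{pq}/|x| + μ'·x_p·x_q/|x|³ (the q-th column of the Kelvin matrix). Then u solves the homogeneous Lamé–Navier system away from the origin: for every x ∈ ℝ³∖{0} and every p ∈ {1,2,3}, μ·(Δu_p)(x) + (λ+μ)·∂_p(∂₁u₁ + ∂₂u₂ + ∂₃u₃)(x) = 0. (The Kelvin matrix is a fundamental solution of the Lamé operator.) -/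
/-- Partial derivative in the `i`-th coordinate direction of a scalar function on `ℝ³`. -/
noncomputable def pd (f : EuclideanSpace ℝ (Fin 3) → ℝ) (i : Fin 3)
    (x : EuclideanSpace ℝ (Fin 3)) : ℝ :=
  fderiv ℝ f x (EuclideanSpace.single i 1)

/-- The `p`-th component of the `q`-th column of the Kelvin matrix,
`u_p(x) = λ'·δ_{pq}/|x| + μ'·x_p·x_q/|x|³`. -/
noncomputable def kelvinColumn (lam mu : ℝ) (q p : Fin 3)
    (x : EuclideanSpace ℝ (Fin 3)) : ℝ :=
  ((lam + 3 * mu) / (4 * Real.pi * mu * (lam + 2 * mu))) * (if p = q then 1 else 0) / ‖x‖ +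
    ((lam + mu) / (4 * Real.pi * mu * (lam + 2 * mu))) * x p * x q / ‖x‖ ^ 3

/-!
Write the `q`-th Kelvin column as `u_p = N_p / |x|³` with the quadratic form
`N_p(x) = λ' δ_pq |x|² + μ' x_p x_q`. For any `C²` function `P` on `ℝ³ ∖ {0}`,
`Δ(P |x|⁻ⁿ) = |x|⁻ⁿ ΔP - 2n |x|⁻ⁿ⁻² (x · ∇P) + n(n-1) P |x|⁻ⁿ⁻²`,
and `x · ∇N_p = 2 N_p` by Euler's relation, so `Δu_p = 2μ' H_pq` with
`H_pq = δ_pq/|x|³ - 3 x_p x_q/|x|⁵`. Likewise `div u = (μ' - λ') x_q/|x|³`, whose `p`-th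
derivative is `(μ' - λ') H_pq`. The Lamé expression is therefore `(2μμ' + (λ+μ)(μ'-λ')) H_pq`,
and `(λ+μ)(λ'-μ') = 2μμ'`.
-/

open Filter Topology

local notation "ℝ³" => EuclideanSpace ℝ (Fin 3)

section PartialDerivative

variable {f g : ℝ³ → ℝ} {x : ℝ³}

theorem HasFDerivAt.pd_eq {L : ℝ³ →L[ℝ] ℝ} (h : HasFDerivAt f L x) (i : Fin 3) :
    pd f i x = L (EuclideanSpace.single i 1) := by
  rw [pd, h.fderiv]

theorem Filter.EventuallyEq.pd_eq (h : f =ᶠ[𝓝 x] g) (i : Fin 3) : pd f i x = pd g i x := by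
  rw [pd, pd, h.fderiv_eq]

theorem pd_add (hf : DifferentiableAt ℝ f x) (hg : DifferentiableAt ℝ g x) (i : Fin 3) :
    pd (fun y => f y + g y) i x = pd f i x + pd g i x :=
  (hf.hasFDerivAt.add hg.hasFDerivAt).pd_eq i

theorem pd_sub (hf : DifferentiableAt ℝ f x) (hg : DifferentiableAt ℝ g x) (i : Fin 3) :
    pd (fun y => f y - g y) i x = pd f i x - pd g i x :=
  (hf.hasFDerivAt.sub hg.hasFDerivAt).pd_eq i

theorem pd_mul (hf : DifferentiableAt ℝ f x) (hg : DifferentiableAt ℝ g x) (i : Fin 3) :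
    pd (fun y => f y * g y) i x = pd f i x * g x + f x * pd g i x := by
  have h : HasFDerivAt (fun y => f y * g y) _ x := hf.hasFDerivAt.mul hg.hasFDerivAt
  rw [h.pd_eq i, pd, pd]
  simp only [add_apply, smul_apply, smul_eq_mul]
  ring

theorem pd_const_mul (c : ℝ) (hf : DifferentiableAt ℝ f x) (i : Fin 3) :
    pd (fun y => c * f y) i x = c * pd f i x :=
  (hf.hasFDerivAt.const_mul c).pd_eq i

theorem pd_comp {φ : ℝ → ℝ} {φ' : ℝ} (hφ : HasDerivAt φ φ' (f x)) (hf : DifferentiableAt ℝ f x)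
    (i : Fin 3) : pd (fun y => φ (f y)) i x = φ' * pd f i x :=
  (hφ.comp_hasFDerivAt x hf.hasFDerivAt).pd_eq i

theorem pd_coord (a i : Fin 3) (x : ℝ³) : pd (fun y => y a) i x = if i = a then 1 else 0 := by
  have h : HasFDerivAt (fun y : ℝ³ => y a) (EuclideanSpace.proj a : ℝ³ →L[ℝ] ℝ) x :=
    (EuclideanSpace.proj a : ℝ³ →L[ℝ] ℝ).hasFDerivAt
  rw [h.pd_eq i]
  simp [eq_comm]

theorem pd_norm_sq (i : Fin 3) (x : ℝ³) : pd (fun y => ‖y‖ ^ 2) i x = 2 * x i := by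
  simp [pd, fderiv_norm_sq_apply, EuclideanSpace.inner_single_right]

theorem pd_norm (hx : x ≠ 0) (i : Fin 3) : pd (fun y => ‖y‖) i x = x i / ‖x‖ := by
  have hnorm : DifferentiableAt ℝ (fun y : ℝ³ => ‖y‖) x := differentiableAt_id.norm ℝ hx
  have h := pd_comp (φ := fun t => t ^ 2) (hasDerivAt_pow 2 ‖x‖) hnorm i
  rw [pd_norm_sq] at h
  have : ‖x‖ ≠ 0 := norm_ne_zero_iff.mpr hx
  field_simp
  norm_num at h
  linarith

theorem pd_inv_norm_pow (n : ℕ) (hx : x ≠ 0) (i : Fin 3) :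
    pd (fun y => (‖y‖ ^ n)⁻¹) i x = -n * x i * (‖x‖ ^ (n + 2))⁻¹ := by
  have hr : ‖x‖ ≠ 0 := norm_ne_zero_iff.mpr hx
  rw [pd_comp (φ := fun t => (t ^ n)⁻¹) (f := fun y => ‖y‖)
    ((hasDerivAt_pow n ‖x‖).inv (pow_ne_zero n hr)) (differentiableAt_id.norm ℝ hx), pd_norm hx]
  rcases n with _ | n
  · simp
  · rw [Nat.add_sub_cancel]
    field_simp
    ring

theorem differentiableAt_inv_norm_pow (n : ℕ) (hx : x ≠ 0) :
    DifferentiableAt ℝ (fun y : ℝ³ => (‖y‖ ^ n)⁻¹) x :=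
  ((differentiableAt_id.norm ℝ hx).pow n).inv (pow_ne_zero n (norm_ne_zero_iff.mpr hx))

theorem pd_mul_inv_norm_pow {P : ℝ³ → ℝ} (hP : DifferentiableAt ℝ P x) (n : ℕ) (hx : x ≠ 0)
    (i : Fin 3) :
    pd (fun y => P y * (‖y‖ ^ n)⁻¹) i x =
      pd P i x * (‖x‖ ^ n)⁻¹ - n * P x * x i * (‖x‖ ^ (n + 2))⁻¹ := by
  rw [pd_mul hP (differentiableAt_inv_norm_pow n hx), pd_inv_norm_pow n hx]
  ring

theorem ContDiff.pd {m n : WithTop ℕ∞} (hf : ContDiff ℝ n f) (hmn : m + 1 ≤ n) (i : Fin 3) :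
    ContDiff ℝ m (pd f i) :=
  (hf.fderiv_right hmn).clm_apply contDiff_const

theorem sum_pd_pd_mul_inv_norm_pow {P : ℝ³ → ℝ} (hP : ContDiff ℝ 2 P) (n : ℕ) (hx : x ≠ 0) :
    ∑ i, pd (pd (fun y => P y * (‖y‖ ^ n)⁻¹) i) i x =
      (∑ i, pd (pd P i) i x) * (‖x‖ ^ n)⁻¹ - 2 * n * (∑ i, x i * pd P i x) * (‖x‖ ^ (n + 2))⁻¹ +
        n * (n - 1) * P x * (‖x‖ ^ (n + 2))⁻¹ := by
  have hPd : Differentiable ℝ P := hP.differentiable (by norm_num)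
  have hP1 (i : Fin 3) : Differentiable ℝ (pd P i) :=
    (hP.pd (m := 1) (by norm_num) i).differentiable one_ne_zero
  have hfirst (i : Fin 3) : pd (fun y => P y * (‖y‖ ^ n)⁻¹) i =ᶠ[𝓝 x]
      fun y => pd P i y * (‖y‖ ^ n)⁻¹ - (n * P y * y i) * (‖y‖ ^ (n + 2))⁻¹ := by
    filter_upwards [isOpen_ne.mem_nhds hx] with y hy
    rw [pd_mul_inv_norm_pow (hPd y) n hy]
  have hsecond (i : Fin 3) : pd (pd (fun y => P y * (‖y‖ ^ n)⁻¹) i) i x =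
      pd (pd P i) i x * (‖x‖ ^ n)⁻¹ - 2 * n * x i * pd P i x * (‖x‖ ^ (n + 2))⁻¹ -
        n * P x * (‖x‖ ^ (n + 2))⁻¹ + n * (n + 2) * P x * x i ^ 2 * (‖x‖ ^ (n + 4))⁻¹ := by
    have hQ : DifferentiableAt ℝ (fun y : ℝ³ => n * P y * y i) x := by fun_prop
    have h1 : DifferentiableAt ℝ (fun y => pd P i y * (‖y‖ ^ n)⁻¹) x :=
      (hP1 i x).mul (differentiableAt_inv_norm_pow n hx)
    have h2 : DifferentiableAt ℝ (fun y => n * P y * y i * (‖y‖ ^ (n + 2))⁻¹) x :=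
      hQ.mul (differentiableAt_inv_norm_pow (n + 2) hx)
    rw [(hfirst i).pd_eq, pd_sub h1 h2,
      pd_mul_inv_norm_pow (hP1 i x) n hx, pd_mul_inv_norm_pow hQ (n + 2) hx,
      pd_mul (by fun_prop) (by fun_prop), pd_const_mul _ (hPd x), pd_coord]
    simp only [if_true]
    push_cast
    ring
  have hsq : x 0 ^ 2 + x 1 ^ 2 + x 2 ^ 2 = ‖x‖ ^ 2 := by
    simp [EuclideanSpace.real_norm_sq_eq, Fin.sum_univ_three]
  have hpow : ‖x‖ ^ 2 * (‖x‖ ^ (n + 4))⁻¹ = (‖x‖ ^ (n + 2))⁻¹ := by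
    have : ‖x‖ ≠ 0 := norm_ne_zero_iff.mpr hx
    field_simp
    ring
  simp only [hsecond, Fin.sum_univ_three]
  linear_combination (n * (n + 2) * P x * (‖x‖ ^ (n + 4))⁻¹) * hsq + (n * (n + 2) * P x) * hpow

end PartialDerivative

noncomputable def kelvinNumerator (a b : ℝ) (q p : Fin 3) (y : ℝ³) : ℝ :=
  a * (if p = q then 1 else 0) * ‖y‖ ^ 2 + b * y p * y q

section KelvinNumerator

variable (a b : ℝ) (q p : Fin 3)

theorem contDiff_kelvinNumerator : ContDiff ℝ 2 (kelvinNumerator a b q p) := by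
  unfold kelvinNumerator
  have := contDiff_norm_sq ℝ (E := ℝ³) (n := 2)
  fun_prop

theorem pd_kelvinNumerator (i : Fin 3) (y : ℝ³) :
    pd (kelvinNumerator a b q p) i y =
      2 * a * (if p = q then 1 else 0) * y i +
        b * ((if i = p then 1 else 0) * y q + (if i = q then 1 else 0) * y p) := by
  have hsq : DifferentiableAt ℝ (fun y : ℝ³ => ‖y‖ ^ 2) y := differentiableAt_id.norm_sq ℝ
  unfold kelvinNumerator
  rw [pd_add (by fun_prop) (by fun_prop), pd_const_mul _ hsq, pd_norm_sq,
    pd_mul (by fun_prop) (by fun_prop), pd_const_mul _ (by fun_prop), pd_coord, pd_coord]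
  ring

theorem sum_pd_pd_kelvinNumerator (x : ℝ³) :
    ∑ i, pd (pd (kelvinNumerator a b q p) i) i x = (6 * a + 2 * b) * (if p = q then 1 else 0) := by
  calc ∑ i, pd (pd (kelvinNumerator a b q p) i) i x
      = ∑ i, (2 * a * (if p = q then 1 else 0) +
          2 * b * (if i = p then (if i = q then 1 else 0) else 0)) := by
        refine Finset.sum_congr rfl fun i _ => ?_
        simp only [funext (pd_kelvinNumerator a b q p i)]
        rw [pd_add (by fun_prop) (by fun_prop), pd_const_mul _ (by fun_prop), pd_coord,
          pd_const_mul _ (by fun_prop), pd_add (by fun_prop) (by fun_prop),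
          pd_const_mul _ (by fun_prop), pd_const_mul _ (by fun_prop), pd_coord, pd_coord,
          if_pos rfl]
        split_ifs <;> ring
    _ = (6 * a + 2 * b) * (if p = q then 1 else 0) := by
        simp only [mul_ite, mul_one, mul_zero, Finset.sum_add_distrib, Finset.sum_ite_irrel,
          Finset.sum_const, Finset.card_univ, Fintype.card_fin, nsmul_eq_mul, Nat.cast_ofNat,
          Finset.sum_ite_eq', Finset.mem_univ, ↓reduceIte]
        split_ifs <;> ring

theorem sum_coord_mul_pd_kelvinNumerator (x : ℝ³) :
    ∑ i, x i * pd (kelvinNumerator a b q p) i x = 2 * kelvinNumerator a b q p x := by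
  calc ∑ i, x i * pd (kelvinNumerator a b q p) i x
      = ∑ i, (2 * a * (if p = q then 1 else 0) * x i ^ 2 +
          b * ((if i = p then x p * x q else 0) + (if i = q then x p * x q else 0))) := by
        refine Finset.sum_congr rfl fun i _ => ?_
        rw [pd_kelvinNumerator]
        split_ifs <;> subst_vars <;> ring
    _ = 2 * a * (if p = q then 1 else 0) * ‖x‖ ^ 2 + b * (x p * x q + x p * x q) := by
        simp [Finset.sum_add_distrib, ← Finset.mul_sum, EuclideanSpace.real_norm_sq_eq]
    _ = 2 * kelvinNumerator a b q p x := by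
        unfold kelvinNumerator
        ring

variable {a b q p} in
theorem sum_pd_pd_kelvinNumerator_mul_inv_norm_cube {x : ℝ³} (hx : x ≠ 0) :
    ∑ i, pd (pd (fun y => kelvinNumerator a b q p y * (‖y‖ ^ 3)⁻¹) i) i x =
      2 * b * ((if p = q then 1 else 0) * (‖x‖ ^ 3)⁻¹ - 3 * x p * x q * (‖x‖ ^ 5)⁻¹) := by
  rw [sum_pd_pd_mul_inv_norm_pow (contDiff_kelvinNumerator a b q p) 3 hx,
    sum_pd_pd_kelvinNumerator, sum_coord_mul_pd_kelvinNumerator]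
  have hpow : ‖x‖ ^ 2 * (‖x‖ ^ 5)⁻¹ = (‖x‖ ^ 3)⁻¹ := by
    have : ‖x‖ ≠ 0 := norm_ne_zero_iff.mpr hx
    field_simp
  unfold kelvinNumerator
  push_cast
  linear_combination (-6 * a * (if p = q then 1 else 0)) * hpow

end KelvinNumerator

section Divergence

variable {a b : ℝ} {q : Fin 3}

theorem sum_pd_kelvinNumerator_mul_inv_norm_cube {y : ℝ³} (hy : y ≠ 0) :
    ∑ l, pd (fun z => kelvinNumerator a b q l z * (‖z‖ ^ 3)⁻¹) l y =
      (b - a) * y q * (‖y‖ ^ 3)⁻¹ := by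
  have hdiv : ∑ l, pd (kelvinNumerator a b q l) l y = (2 * a + 4 * b) * y q :=
    calc ∑ l, pd (kelvinNumerator a b q l) l y
        = ∑ l, ((if l = q then (2 * a + b) * y q else 0) + b * y q) := by
          refine Finset.sum_congr rfl fun l _ => ?_
          rw [pd_kelvinNumerator, if_pos rfl]
          split_ifs with h
          · subst h
            ring
          · ring
      _ = (2 * a + 4 * b) * y q := by
          simp only [Finset.sum_add_distrib, Finset.sum_ite_eq', Finset.mem_univ, ↓reduceIte,
            Finset.sum_const, Finset.card_univ, Fintype.card_fin, nsmul_eq_mul, Nat.cast_ofNat]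
          ring
  have heuler : ∑ l, kelvinNumerator a b q l y * y l = (a + b) * ‖y‖ ^ 2 * y q :=
    calc ∑ l, kelvinNumerator a b q l y * y l
        = ∑ l, ((if l = q then a * ‖y‖ ^ 2 * y q else 0) + b * y q * y l ^ 2) := by
          refine Finset.sum_congr rfl fun l _ => ?_
          unfold kelvinNumerator
          split_ifs <;> subst_vars <;> ring
      _ = (a + b) * ‖y‖ ^ 2 * y q := by
          simp only [EuclideanSpace.real_norm_sq_eq, Finset.sum_add_distrib, Finset.sum_ite_eq',
            Finset.mem_univ, ↓reduceIte, ← Finset.mul_sum]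
          ring
  have hpow : ‖y‖ ^ 2 * (‖y‖ ^ 5)⁻¹ = (‖y‖ ^ 3)⁻¹ := by
    have : ‖y‖ ≠ 0 := norm_ne_zero_iff.mpr hy
    field_simp
  simp only [pd_mul_inv_norm_pow ((contDiff_kelvinNumerator a b q _).differentiable two_ne_zero y)
    3 hy, Finset.sum_sub_distrib, ← Finset.sum_mul]
  simp only [mul_assoc, ← Finset.mul_sum, hdiv, heuler]
  push_cast
  linear_combination (-3 * (a + b) * y q) * hpow

theorem pd_sum_pd_kelvinNumerator_mul_inv_norm_cube {x : ℝ³} (hx : x ≠ 0) (p : Fin 3) :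
    pd (fun y => ∑ l, pd (fun z => kelvinNumerator a b q l z * (‖z‖ ^ 3)⁻¹) l y) p x =
      (b - a) * ((if p = q then 1 else 0) * (‖x‖ ^ 3)⁻¹ - 3 * x p * x q * (‖x‖ ^ 5)⁻¹) := by
  have hdiv : (fun y => ∑ l, pd (fun z => kelvinNumerator a b q l z * (‖z‖ ^ 3)⁻¹) l y) =ᶠ[𝓝 x]
      fun y => (b - a) * y q * (‖y‖ ^ 3)⁻¹ := by
    filter_upwards [isOpen_ne.mem_nhds hx] with y hy
    exact sum_pd_kelvinNumerator_mul_inv_norm_cube hy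
  rw [hdiv.pd_eq, pd_mul_inv_norm_pow (by fun_prop) 3 hx, pd_const_mul _ (by fun_prop), pd_coord]
  push_cast
  ring

end Divergence

noncomputable def lamPrime (lam mu : ℝ) : ℝ := (lam + 3 * mu) / (4 * Real.pi * mu * (lam + 2 * mu))

noncomputable def muPrime (lam mu : ℝ) : ℝ := (lam + mu) / (4 * Real.pi * mu * (lam + 2 * mu))

theorem kelvinColumn_eq (lam mu : ℝ) (q p : Fin 3) :
    kelvinColumn lam mu q p =
      fun y => kelvinNumerator (lamPrime lam mu) (muPrime lam mu) q p y * (‖y‖ ^ 3)⁻¹ := by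
  funext y
  unfold kelvinColumn kelvinNumerator lamPrime muPrime
  rcases eq_or_ne ‖y‖ 0 with hy | hy
  · simp [hy]
  · field_simp

theorem add_mul_lamPrime_sub_muPrime (lam mu : ℝ) :
    (lam + mu) * (lamPrime lam mu - muPrime lam mu) = 2 * mu * muPrime lam mu := by
  unfold lamPrime muPrime
  ring

theorem kelvin_fundamental_solution_general
    (lam mu : ℝ) (q : Fin 3) :
    ∀ x : EuclideanSpace ℝ (Fin 3), x ≠ 0 → ∀ p : Fin 3,
      mu * (∑ i : Fin 3, pd (pd (kelvinColumn lam mu q p) i) i x) +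
        (lam + mu) *
          pd (fun y => ∑ l : Fin 3, pd (kelvinColumn lam mu q l) l y) p x = 0 := by
  intro x hx p
  simp only [kelvinColumn_eq]
  rw [sum_pd_pd_kelvinNumerator_mul_inv_norm_cube hx,
    pd_sum_pd_kelvinNumerator_mul_inv_norm_cube hx]
  linear_combination (-((if p = q then 1 else 0) * (‖x‖ ^ 3)⁻¹ - 3 * x p * x q * (‖x‖ ^ 5)⁻¹)) *
    add_mul_lamPrime_sub_muPrime lam mu

/-- Each column of the Kelvin matrix solves the homogeneous Lamé–Navier system away from
the origin: `μ Δu_p + (λ+μ) ∂_p (div u) = 0` on `ℝ³ ∖ {0}`. -/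
theorem kelvin_fundamental_solution
    (lam mu : ℝ) (hmu : 0 < mu) (hlam2mu : 0 < lam + 2 * mu) (q : Fin 3) :
    ∀ x : EuclideanSpace ℝ (Fin 3), x ≠ 0 → ∀ p : Fin 3,
      mu * (∑ i : Fin 3, pd (pd (kelvinColumn lam mu q p) i) i x) +
        (lam + mu) *
          pd (fun y => ∑ l : Fin 3, pd (kelvinColumn lam mu q l) l y) p x = 0 :=
  kelvin_fundamental_solution_general lam mu q
end
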